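/- Let λ > 0 and let x_t(i) ∈ ℝ^d for t ∈ [T], i ∈ [k] satisfy ‖x_t(i)‖₂ ≤ L. Define V_t = λI + Σ_{s=1}^t Σ_{i=1}^k x_s(i) x_s(i)ᵀ and ‖x‖_{V^{-1}} = sqrt(xᵀ V^{-1} x). Then Σ_{t=1}^T Σ_{i=1}^k min(1/√k, ‖x_t(i)‖_{V_{t-1}^{-1}}) ≤ sqrt(2dkT · log(1 + L²kT/(dλ))). -/

import Mathlib

/-!
For `A ≻ 0` and `B ⪰ 0`, conjugating by `A^{-1/2}` and using `∏ (1 + μᵢ) ≥ 1 + ∑ μᵢ` on the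
eigenvalues gives `det (A + B) ≥ det A · (1 + tr (A⁻¹ B))`. Applied to `A = V_t` and the batch
`B = ∑ᵢ x_t(i) x_t(i)ᵀ`, this yields
`∑ᵢ min (1/k) ‖x_t(i)‖²_{V_t⁻¹} ≤ min 1 (∑ᵢ ‖x_t(i)‖²_{V_t⁻¹}) ≤ 2 (log det V_{t+1} - log det V_t)`,
which telescopes. Since `log μ ≤ log c + μ / c - 1`, a trace bound `tr V_T ≤ d c` gives
`log det V_T ≤ d log c`, with `c = λ + L²kT/d`; Cauchy–Schwarz over the `kT` terms finishes.
-/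

open Matrix Finset

theorem Finset.one_add_sum_le_prod_one_add {ι R : Type*} [CommSemiring R] [PartialOrder R]
    [IsOrderedRing R] (s : Finset ι) {f : ι → R} (hf : ∀ i ∈ s, 0 ≤ f i) :
    1 + ∑ i ∈ s, f i ≤ ∏ i ∈ s, (1 + f i) := by
  classical
  induction s using Finset.induction_on with
  | empty => simp
  | insert a s ha ih =>
    have hfa : 0 ≤ f a := hf a (mem_insert_self a s)
    have hs : ∀ i ∈ s, 0 ≤ f i := fun i hi => hf i (mem_insert_of_mem hi)
    rw [sum_insert ha, prod_insert ha]
    calc 1 + (f a + ∑ i ∈ s, f i)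
        ≤ 1 + (f a + ∑ i ∈ s, f i) + f a * ∑ i ∈ s, f i :=
          le_add_of_nonneg_right (mul_nonneg hfa (sum_nonneg hs))
      _ = (1 + f a) * (1 + ∑ i ∈ s, f i) := by ring
      _ ≤ (1 + f a) * ∏ i ∈ s, (1 + f i) :=
          mul_le_mul_of_nonneg_left (ih hs) (add_nonneg zero_le_one hfa)

theorem Finset.sum_min_one_div_card_le_min_one_sum {ι : Type*} (s : Finset ι) (f : ι → ℝ) :
    ∑ i ∈ s, min (1 / (#s : ℝ)) (f i) ≤ min 1 (∑ i ∈ s, f i) := by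
  refine le_min ?_ (sum_le_sum fun i _ => min_le_right _ _)
  calc ∑ i ∈ s, min (1 / (#s : ℝ)) (f i) ≤ ∑ _i ∈ s, (1 / #s : ℝ) :=
        sum_le_sum fun i _ => min_le_left _ _
    _ = #s / #s := by rw [sum_const, nsmul_eq_mul, mul_one_div]
    _ ≤ 1 := div_self_le_one _

theorem Real.sum_sqrt_le_sqrt_card_mul_sum {ι : Type*} (s : Finset ι) {f : ι → ℝ}
    (hf : ∀ i ∈ s, 0 ≤ f i) : ∑ i ∈ s, √(f i) ≤ √(#s * ∑ i ∈ s, f i) := by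
  simpa [Real.sqrt_mul (Nat.cast_nonneg _), sum_congr rfl fun i hi => Real.sq_sqrt (hf i hi)]
    using Real.sum_mul_le_sqrt_mul_sqrt s (fun _ => 1) (fun i => √(f i))

theorem Real.min_one_le_two_mul_log_one_add {s : ℝ} (hs : 0 ≤ s) :
    min 1 s ≤ 2 * Real.log (1 + s) := by
  have h1s : 0 < 1 + s := by linarith
  calc min 1 s ≤ 2 * (1 - (1 + s)⁻¹) := by
        rw [show 2 * (1 - (1 + s)⁻¹) = 2 * s / (1 + s) by field_simp; ring, le_div_iff₀ h1s]
        rcases le_total s 1 with h | h <;> simp only [min_eq_left, min_eq_right, h] <;> nlinarith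
    _ ≤ 2 * Real.log (1 + s) := by gcongr; exact Real.one_sub_inv_le_log_of_pos h1s

namespace Matrix

variable {n : Type*} [Fintype n]

theorem trace_mul_vecMulVec_self (A : Matrix n n ℝ) (x : n → ℝ) :
    (A * vecMulVec x x).trace = x ⬝ᵥ A *ᵥ x := by
  rw [mul_vecMulVec, trace_vecMulVec, dotProduct_comm]

theorem posSemidef_sum_vecMulVec_self {ι : Type*} (s : Finset ι) (x : ι → n → ℝ) :
    (∑ i ∈ s, vecMulVec (x i) (x i)).PosSemidef :=
  posSemidef_sum s fun i _ => by simpa using posSemidef_vecMulVec_self_star (x i)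

theorem trace_sum_vecMulVec_self_le {ι : Type*} (s : Finset ι) (x : ι → n → ℝ) {c : ℝ}
    (h : ∀ i ∈ s, x i ⬝ᵥ x i ≤ c) : (∑ i ∈ s, vecMulVec (x i) (x i)).trace ≤ #s * c := by
  simpa [trace_sum, trace_vecMulVec] using sum_le_card_nsmul s _ c h

theorem posDef_of_eq_add_sum_vecMulVec {ι : Type*} {V : ℕ → Matrix n n ℝ}
    {s : Finset ι} {x : ℕ → ι → n → ℝ} (h0 : (V 0).PosDef)
    (hsucc : ∀ t, V (t + 1) = V t + ∑ i ∈ s, vecMulVec (x t i) (x t i)) (t : ℕ) :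
    (V t).PosDef := by
  induction t with
  | zero => exact h0
  | succ t ih => exact hsucc t ▸ ih.add_posSemidef (posSemidef_sum_vecMulVec_self s (x t))

variable [DecidableEq n]

theorem IsHermitian.det_one_add {A : Matrix n n ℝ} (hA : A.IsHermitian) :
    (1 + A).det = ∏ i, (1 + hA.eigenvalues i) := by
  have h : cfc (fun x : ℝ => 1 + x) A = 1 + A := by
    rw [cfc_const_add (1 : ℝ) (fun x => x) A, cfc_id' ℝ A, Algebra.algebraMap_eq_smul_one,
      one_smul]
  rw [← h, hA.cfc_eq]
  simp [IsHermitian.cfc, -Unitary.conjStarAlgAut_apply]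

theorem PosSemidef.one_add_trace_le_det_one_add {A : Matrix n n ℝ} (hA : A.PosSemidef) :
    1 + A.trace ≤ (1 + A).det := by
  rw [hA.1.det_one_add, hA.1.trace_eq_sum_eigenvalues]
  exact one_add_sum_le_prod_one_add _ fun i _ => hA.eigenvalues_nonneg i

open scoped MatrixOrder in
theorem PosDef.det_mul_one_add_trace_le_det_add {A B : Matrix n n ℝ} (hA : A.PosDef)
    (hB : B.PosSemidef) : A.det * (1 + (A⁻¹ * B).trace) ≤ (A + B).det := by
  set S := CFC.sqrt A
  have hSS : S * S = A := CFC.sqrt_mul_sqrt_self A hA.posSemidef.nonneg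
  have hS_inv : (S⁻¹).PosSemidef := (CFC.sqrt_nonneg A).posSemidef.inv
  have hA_inv : A⁻¹ = S⁻¹ * S⁻¹ := by rw [← hSS, mul_inv_rev]
  have hN : (S⁻¹ * B * S⁻¹).PosSemidef := by
    have h := hB.conjTranspose_mul_mul_same S⁻¹
    rwa [hS_inv.1.eq] at h
  calc A.det * (1 + (A⁻¹ * B).trace) = A.det * (1 + (S⁻¹ * B * S⁻¹).trace) := by
        rw [hA_inv, mul_assoc, trace_mul_comm, mul_assoc]
    _ ≤ A.det * (1 + S⁻¹ * B * S⁻¹).det :=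
        mul_le_mul_of_nonneg_left hN.one_add_trace_le_det_one_add hA.det_pos.le
    _ = (A * (1 + A⁻¹ * B)).det := by
        rw [det_mul, det_one_add_mul_comm (S⁻¹ * B) S⁻¹, ← mul_assoc, ← hA_inv]
    _ = (A + B).det := by
        rw [mul_add, mul_one, ← mul_assoc, mul_nonsing_inv _ hA.det_pos.ne'.isUnit, one_mul]

theorem PosDef.log_det_le_card_mul_log_of_trace_le {A : Matrix n n ℝ} (hA : A.PosDef) {c : ℝ}
    (hc : 0 < c) (htr : A.trace ≤ Fintype.card n * c) :
    Real.log A.det ≤ Fintype.card n * Real.log c := by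
  have hpos := hA.eigenvalues_pos
  have hlog : ∀ i, Real.log (hA.1.eigenvalues i) ≤ Real.log c + (hA.1.eigenvalues i / c - 1) :=
    fun i => by
      have := Real.log_le_sub_one_of_pos (div_pos (hpos i) hc)
      rw [Real.log_div (hpos i).ne' hc.ne'] at this
      linarith
  have htr' : ∑ i, hA.1.eigenvalues i / c ≤ Fintype.card n := by
    rw [← sum_div, div_le_iff₀ hc]
    simpa [hA.1.trace_eq_sum_eigenvalues] using htr
  rw [hA.1.det_eq_prod_eigenvalues]
  simp only [RCLike.ofReal_real_eq_id, id]
  rw [Real.log_prod fun i _ => (hpos i).ne']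
  calc ∑ i, Real.log (hA.1.eigenvalues i) ≤ ∑ i, (Real.log c + (hA.1.eigenvalues i / c - 1)) :=
        sum_le_sum fun i _ => hlog i
    _ = Fintype.card n * Real.log c + (∑ i, hA.1.eigenvalues i / c - Fintype.card n) := by
        simp [sum_add_distrib, sum_sub_distrib]
    _ ≤ Fintype.card n * Real.log c := by linarith

theorem PosDef.sum_min_le_two_mul_log_det_add_sub_log_det {A : Matrix n n ℝ} (hA : A.PosDef)
    {ι : Type*} (s : Finset ι) (x : ι → n → ℝ) :
    ∑ i ∈ s, min (1 / (#s : ℝ)) (x i ⬝ᵥ A⁻¹ *ᵥ x i) ≤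
      2 * (Real.log (A + ∑ i ∈ s, vecMulVec (x i) (x i)).det - Real.log A.det) := by
  set u := fun i => x i ⬝ᵥ A⁻¹ *ᵥ x i
  have hu : 0 ≤ ∑ i ∈ s, u i := sum_nonneg fun i _ => by
    simpa using hA.inv.posSemidef.dotProduct_mulVec_nonneg (x i)
  have hdet : A.det * (1 + ∑ i ∈ s, u i) ≤ (A + ∑ i ∈ s, vecMulVec (x i) (x i)).det := by
    simpa [mul_sum, trace_sum, trace_mul_vecMulVec_self, u] using
      hA.det_mul_one_add_trace_le_det_add (posSemidef_sum_vecMulVec_self s x)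
  have hlog : Real.log (1 + ∑ i ∈ s, u i) ≤
      Real.log (A + ∑ i ∈ s, vecMulVec (x i) (x i)).det - Real.log A.det := by
    have := Real.log_le_log (by have := hA.det_pos; positivity) hdet
    rw [Real.log_mul hA.det_pos.ne' (by positivity)] at this
    linarith
  calc ∑ i ∈ s, min (1 / (#s : ℝ)) (u i) ≤ min 1 (∑ i ∈ s, u i) :=
        sum_min_one_div_card_le_min_one_sum s u
    _ ≤ 2 * Real.log (1 + ∑ i ∈ s, u i) := Real.min_one_le_two_mul_log_one_add hu
    _ ≤ _ := by gcongr

section BatchedGram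

variable {ι : Type*} {V : ℕ → Matrix n n ℝ} {s : Finset ι} {x : ℕ → ι → n → ℝ}

theorem sum_sum_min_le_two_mul_log_det_sub_log_det (h0 : (V 0).PosDef)
    (hsucc : ∀ t, V (t + 1) = V t + ∑ i ∈ s, vecMulVec (x t i) (x t i)) (T : ℕ) :
    ∑ t ∈ range T, ∑ i ∈ s, min (1 / (#s : ℝ)) (x t i ⬝ᵥ (V t)⁻¹ *ᵥ x t i) ≤
      2 * (Real.log (V T).det - Real.log (V 0).det) := by
  calc _ ≤ ∑ t ∈ range T, 2 * (Real.log (V (t + 1)).det - Real.log (V t).det) :=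
        sum_le_sum fun t _ => hsucc t ▸
          (posDef_of_eq_add_sum_vecMulVec h0 hsucc t).sum_min_le_two_mul_log_det_add_sub_log_det s
            (x t)
    _ = _ := by rw [← mul_sum, sum_range_sub fun t => Real.log (V t).det]

theorem sum_sum_min_sqrt_le_sqrt_log_det_sub_log_det (h0 : (V 0).PosDef)
    (hsucc : ∀ t, V (t + 1) = V t + ∑ i ∈ s, vecMulVec (x t i) (x t i)) (T : ℕ) :
    ∑ t ∈ range T, ∑ i ∈ s, min (1 / √(#s : ℝ)) √(x t i ⬝ᵥ (V t)⁻¹ *ᵥ x t i) ≤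
      √(2 * T * #s * (Real.log (V T).det - Real.log (V 0).det)) := by
  have hu : ∀ t i, 0 ≤ x t i ⬝ᵥ (V t)⁻¹ *ᵥ x t i := fun t i => by
    simpa using (posDef_of_eq_add_sum_vecMulVec h0 hsucc t).inv.posSemidef.dotProduct_mulVec_nonneg
      (x t i)
  have hmin : ∀ a b : ℝ, min (1 / √a) √b = √(min (1 / a) b) := fun a b => by
    rw [Real.sqrt_monotone.map_min, one_div, one_div, Real.sqrt_inv]
  simp only [hmin, ← sum_product']
  calc _ ≤ √(#(range T ×ˢ s) *
        ∑ p ∈ range T ×ˢ s, min (1 / (#s : ℝ)) (x p.1 p.2 ⬝ᵥ (V p.1)⁻¹ *ᵥ x p.1 p.2)) :=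
        Real.sum_sqrt_le_sqrt_card_mul_sum _ fun p _ => le_min (by positivity) (hu p.1 p.2)
    _ ≤ _ := by
        apply Real.sqrt_le_sqrt
        rw [card_product, card_range, sum_product, Nat.cast_mul]
        calc _ ≤ (T * #s : ℝ) * (2 * (Real.log (V T).det - Real.log (V 0).det)) :=
              mul_le_mul_of_nonneg_left (sum_sum_min_le_two_mul_log_det_sub_log_det h0 hsucc T)
                (by positivity)
          _ = _ := by ring

end BatchedGram

end Matrix

theorem elliptic_potential_batched_sqrt_general {d k T : ℕ}
    (L lam : ℝ) (hlam : 0 < lam) (x : ℕ → ℕ → (Fin d → ℝ))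
    (hL : ∀ t ∈ Finset.range T, ∀ i ∈ Finset.range k, Real.sqrt (∑ j, (x t i j) ^ 2) ≤ L)
    (V : ℕ → Matrix (Fin d) (Fin d) ℝ)
    (hV : ∀ t, V t = lam • (1 : Matrix (Fin d) (Fin d) ℝ) +
      ∑ s ∈ Finset.range t, ∑ i ∈ Finset.range k, vecMulVec (x s i) (x s i)) :
    ∑ t ∈ Finset.range T, ∑ i ∈ Finset.range k,
        min (1 / Real.sqrt k) (Real.sqrt (x t i ⬝ᵥ (V t)⁻¹ *ᵥ x t i)) ≤
      Real.sqrt (2 * d * k * T * Real.log (1 + L ^ 2 * k * T / (d * lam))) := by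
  obtain rfl | hd := Nat.eq_zero_or_pos d
  -- for `d = 0` every quadratic form is an empty sum, and both sides vanish
  · simp
  set R := 1 + L ^ 2 * k * T / (d * lam)
  have hsucc : ∀ t, V (t + 1) = V t + ∑ i ∈ range k, vecMulVec (x t i) (x t i) := fun t => by
    rw [hV, hV, sum_range_succ, add_assoc]
  have hV0 : V 0 = lam • 1 := by simp [hV]
  have h0 : (V 0).PosDef := hV0 ▸ PosDef.one.smul hlam
  have htrace : (V T).trace ≤ d * (lam * R) := by
    have hx : ∀ t ∈ range T, ∀ i ∈ range k, x t i ⬝ᵥ x t i ≤ L ^ 2 := fun t ht i hi => by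
      simpa [dotProduct, sq] using (Real.sqrt_le_iff.mp (hL t ht i hi)).2
    calc (V T).trace ≤ d * lam + ∑ _t ∈ range T, (k * L ^ 2) := by
          rw [hV, trace_add, trace_smul, trace_one, trace_sum, Fintype.card_fin, smul_eq_mul,
            mul_comm lam]
          gcongr with t ht
          simpa using trace_sum_vecMulVec_self_le _ _ (hx t ht)
      _ = d * (lam * R) := by
          simp only [sum_const, card_range, nsmul_eq_mul, R]
          field_simp
  have hlogdet : Real.log (V T).det - Real.log (V 0).det ≤ d * Real.log R := by
    have := (posDef_of_eq_add_sum_vecMulVec h0 hsucc T).log_det_le_card_mul_log_of_trace_le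
      (c := lam * R) (by positivity) (by simpa using htrace)
    rw [hV0, det_smul, det_one, mul_one, Real.log_pow, Fintype.card_fin]
    rw [Real.log_mul hlam.ne' (by positivity), Fintype.card_fin] at this
    linarith
  calc _ ≤ √(2 * T * k * (Real.log (V T).det - Real.log (V 0).det)) := by
        simpa using sum_sum_min_sqrt_le_sqrt_log_det_sub_log_det h0 hsucc T
    _ ≤ _ := by
        apply Real.sqrt_le_sqrt
        calc _ ≤ 2 * T * k * (d * Real.log R) := by gcongr
          _ = _ := by ring

theorem elliptic_potential_batched_sqrt {d k T : ℕ} (hd : 0 < d) (hk : 0 < k)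
    (L lam : ℝ) (hlam : 0 < lam) (x : ℕ → ℕ → (Fin d → ℝ))
    (hL : ∀ t ∈ Finset.range T, ∀ i ∈ Finset.range k, Real.sqrt (∑ j, (x t i j) ^ 2) ≤ L)
    (V : ℕ → Matrix (Fin d) (Fin d) ℝ)
    (hV : ∀ t, V t = lam • (1 : Matrix (Fin d) (Fin d) ℝ) +
      ∑ s ∈ Finset.range t, ∑ i ∈ Finset.range k, vecMulVec (x s i) (x s i)) :
    ∑ t ∈ Finset.range T, ∑ i ∈ Finset.range k,
        min (1 / Real.sqrt k) (Real.sqrt (x t i ⬝ᵥ (V t)⁻¹ *ᵥ x t i)) ≤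
      Real.sqrt (2 * d * k * T * Real.log (1 + L ^ 2 * k * T / (d * lam))) :=
  elliptic_potential_batched_sqrt_general L lam hlam x hL V hV
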